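/- arXiv:2203.10814 — 6 statements merged into one kernel-verified Lean document; each statement's English description precedes it below -/
import Mathlib

section
/- Let G be a finite abelian group of order M ≥ 2 and exponent q, and let S ⊆ G be a generating set containing the identity element. Then there exists a positive integer k with k ≤ q·log M / log q such that the k-fold sumset S + S + ··· + S (k times) equals all of G. -/
private lemma log_key_ineq {d q : ℝ} (hd : 2 ≤ d) (hdq : d ≤ q) :
    (d - 1) * Real.log q ≤ q * Real.log d := by
  have hd0 : (0:ℝ) < d := by linarith
  have hq0 : (0:ℝ) < q := by linarith
  have h1 : d * (Real.log q - Real.log d) ≤ q - d := by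
    have h := Real.log_le_sub_one_of_pos (show (0:ℝ) < q / d by positivity)
    rw [Real.log_div (by linarith) (by linarith)] at h
    have := mul_le_mul_of_nonneg_left h (le_of_lt hd0)
    calc d * (Real.log q - Real.log d) ≤ d * (q / d - 1) := this
      _ = q - d := by field_simp
  have h2 : d - 1 ≤ d * Real.log d := by
    have h := Real.log_le_sub_one_of_pos (show (0:ℝ) < 1 / d by positivity)
    rw [Real.log_div one_ne_zero (by linarith), Real.log_one] at h
    have := mul_le_mul_of_nonneg_left h (le_of_lt hd0)
    have hdd : d * (1 / d) = 1 := by field_simp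
    nlinarith [this]
  have hL : 0 ≤ Real.log d := Real.log_nonneg (by linarith)
  have p1 : (d - 1) * (d * (Real.log q - Real.log d)) ≤ (d - 1) * (q - d) :=
    mul_le_mul_of_nonneg_left h1 (by linarith)
  have p2 : (q - d + 1) * (d - 1) ≤ (q - d + 1) * (d * Real.log d) :=
    mul_le_mul_of_nonneg_left h2 (by linarith)
  nlinarith [p1, p2, mul_pos hd0 hq0]

private lemma sumset_key (G : Type*) [AddCommGroup G] [Fintype G]
    (S : Set G) (h0 : (0:G) ∈ S) (hgen : AddSubgroup.closure S = ⊤) :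
    ∀ (n : ℕ) (H : AddSubgroup G), Fintype.card G - Nat.card H ≤ n →
    ∃ k : ℕ, (H ≠ ⊤ → 0 < k) ∧
      (k : ℝ) ≤ (AddMonoid.exponent G : ℝ) * Real.log H.index /
        Real.log (AddMonoid.exponent G) ∧
      ∀ g : G, ∃ f : Fin k → G, (∀ i, f i ∈ S) ∧ g - ∑ i, f i ∈ H := by
  intro n
  induction n with
  | zero =>
    intro H hcard
    have hle : Nat.card ↥H ≤ Nat.card G := Nat.card_le_card_of_injective _ Subtype.val_injective
    have hcg : Nat.card G = Fintype.card G := Nat.card_eq_fintype_card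
    have hH : H = ⊤ := H.eq_top_of_card_eq (by omega)
    refine ⟨0, fun h => absurd hH h, ?_, ?_⟩
    · rw [hH, AddSubgroup.index_top]
      simp
    · intro g
      exact ⟨fun i => i.elim0, fun i => i.elim0, by simp [hH]⟩
  | succ n ih =>
    intro H hcard
    by_cases hH : H = ⊤
    · refine ⟨0, fun h => absurd hH h, ?_, ?_⟩
      · rw [hH, AddSubgroup.index_top]
        simp
      · intro g
        exact ⟨fun i => i.elim0, fun i => i.elim0, by simp [hH]⟩
    · -- find s ∈ S not in H
      obtain ⟨s, hsS, hsH⟩ : ∃ s ∈ S, s ∉ H := by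
        by_contra h
        push_neg at h
        have : (⊤ : AddSubgroup G) ≤ H := hgen ▸ (AddSubgroup.closure_le H).mpr h
        exact hH (top_le_iff.mp this)
      have hNT : Nontrivial G := ⟨s, 0, fun h => hsH (h ▸ H.zero_mem)⟩
      have hq2 : 2 ≤ AddMonoid.exponent G := AddMonoid.one_lt_exponent
      set t : G ⧸ H := QuotientAddGroup.mk s with htdef
      set d : ℕ := addOrderOf t with hd
      have ht0 : t ≠ 0 := fun h => hsH ((QuotientAddGroup.eq_zero_iff s).mp h)
      have hd1 : d ≠ 1 := by
        rw [hd, Ne, AddMonoid.addOrderOf_eq_one_iff]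
        exact ht0
      have hdpos : 0 < d := addOrderOf_pos t
      have hd2 : 2 ≤ d := by omega
      have hdq : d ∣ AddMonoid.exponent G := by
        have h1 : addOrderOf t ∣ addOrderOf s := by
          have := addOrderOf_map_dvd (QuotientAddGroup.mk' H) s
          simpa using this
        exact dvd_trans h1 (AddMonoid.addOrder_dvd_exponent s)
      set H' : AddSubgroup G := H ⊔ AddSubgroup.zmultiples s with hH'def
      have hHle : H ≤ H' := le_sup_left
      have hsH' : s ∈ H' :=
        le_sup_right (α := AddSubgroup G) (AddSubgroup.mem_zmultiples s)
      -- difference lemma: z•s - (z % d)•s ∈ H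
      have hmodmem : ∀ (z : ℤ) (c : ℕ), (c : ℤ) = z % (d : ℤ) → z • s - (c:ℕ) • s ∈ H := by
        intro z c hc
        have hmk : (QuotientAddGroup.mk (z • s) : G ⧸ H) = QuotientAddGroup.mk ((c:ℤ) • s) := by
          rw [QuotientAddGroup.mk_zsmul, QuotientAddGroup.mk_zsmul, ← htdef, hc]
          rw [hd]
          exact (mod_addOrderOf_zsmul t z).symm
        have := (QuotientAddGroup.eq_iff_sub_mem).mp hmk
        simpa [natCast_zsmul] using this
      -- decomposition of H'
      have decomp : ∀ x ∈ H', ∃ c : ℕ, c < d ∧ x - c • s ∈ H := by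
        intro x hx
        rw [hH'def, AddSubgroup.mem_sup] at hx
        obtain ⟨y, hy, z, hz, hyz⟩ := hx
        obtain ⟨m, hm⟩ := AddSubgroup.mem_zmultiples_iff.mp hz
        have hd0' : (0:ℤ) < (d:ℤ) := by exact_mod_cast hdpos
        have hnonneg : 0 ≤ m % (d:ℤ) := Int.emod_nonneg m (by omega)
        have hlt : m % (d:ℤ) < (d:ℤ) := Int.emod_lt_of_pos m hd0'
        refine ⟨(m % (d:ℤ)).toNat, by omega, ?_⟩
        have hcast : (((m % (d:ℤ)).toNat : ℕ) : ℤ) = m % (d:ℤ) := Int.toNat_of_nonneg hnonneg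
        have hmem := hmodmem m _ hcast
        have : x - (m % (d:ℤ)).toNat • s = y + (m • s - (m % (d:ℤ)).toNat • s) := by
          rw [← hyz, ← hm]; abel
        rw [this]
        exact H.add_mem hy hmem
      -- injectivity and cardinality
      have hinj : Function.Injective
          (fun p : Fin d × H => (⟨(p.1 : ℕ) • s + (p.2 : G),
            H'.add_mem (AddSubgroup.nsmul_mem H' hsH' _) (hHle p.2.2)⟩ : H')) := by
        rintro ⟨c₁, h₁⟩ ⟨c₂, h₂⟩ heq
        simp only [Subtype.mk_eq_mk] at heq
        have hmk : ((c₁ : ℕ) : ℤ) • t = ((c₂ : ℕ) : ℤ) • t := by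
          have : (QuotientAddGroup.mk ((c₁:ℕ) • s + (h₁:G)) : G ⧸ H)
              = QuotientAddGroup.mk ((c₂:ℕ) • s + (h₂:G)) := by rw [heq]
          rw [QuotientAddGroup.mk_add, QuotientAddGroup.mk_add,
            (QuotientAddGroup.eq_zero_iff _).mpr h₁.2, (QuotientAddGroup.eq_zero_iff _).mpr h₂.2,
            add_zero, add_zero] at this
          simpa [natCast_zsmul] using congrArg (fun x => x) this
        have hcc : (c₁ : ℕ) = (c₂ : ℕ) := by
          have h1 : ((c₁:ℕ)) • t = ((c₂:ℕ)) • t := by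
            simpa [natCast_zsmul] using hmk
          exact nsmul_injOn_Iio_addOrderOf (by exact c₁.isLt) (by exact c₂.isLt) h1
        have : c₁ = c₂ := Fin.ext hcc
        subst this
        have : (h₁ : G) = (h₂ : G) := by
          have := heq
          exact add_left_cancel this
        simp [Subtype.ext this]
      have hcardle : d * Nat.card H ≤ Nat.card H' := by
        have := Nat.card_le_card_of_injective _ hinj
        simpa [Nat.card_prod, Nat.card_eq_fintype_card] using this
      have hcardpos : 0 < Nat.card H := Nat.card_pos
      have hHlt : Nat.card H < Nat.card H' := by
        have h2 : 2 * Nat.card H ≤ d * Nat.card H := Nat.mul_le_mul_right _ hd2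
        omega
      -- index relation
      have hidx : d * H'.index ≤ H.index := by
        have h1 := AddSubgroup.index_mul_card H
        have h2 := AddSubgroup.index_mul_card H'
        have h3 : d * H'.index * Nat.card H ≤ H'.index * Nat.card H' := by
          calc d * H'.index * Nat.card H = H'.index * (d * Nat.card H) := by ring
            _ ≤ H'.index * Nat.card H' := Nat.mul_le_mul_left _ hcardle
        rw [h2, ← h1] at h3
        exact Nat.le_of_mul_le_mul_right h3 hcardpos
      -- apply IH
      have hcardH'le : Nat.card H' ≤ Nat.card G := Nat.card_le_card_of_injective _ Subtype.val_injective
      have hmeas : Fintype.card G - Nat.card H' ≤ n := by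
        rw [← Nat.card_eq_fintype_card] at hcard ⊢
        omega
      obtain ⟨k', hk'pos, hk'bound, hk'rep⟩ := ih H' hmeas
      refine ⟨k' + (d - 1), fun _ => by omega, ?_, ?_⟩
      · -- real bound
        have hQ2 : (2:ℝ) ≤ (AddMonoid.exponent G : ℝ) := by exact_mod_cast hq2
        have hlogQ : 0 < Real.log (AddMonoid.exponent G : ℝ) := Real.log_pos (by linarith)
        have hdleQ : (d:ℝ) ≤ (AddMonoid.exponent G : ℝ) := by
          have := Nat.le_of_dvd (by omega) hdq
          exact_mod_cast this
        have hd2R : (2:ℝ) ≤ (d:ℝ) := by exact_mod_cast hd2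
        have hkey : ((d:ℝ) - 1) * Real.log (AddMonoid.exponent G : ℝ) ≤ (AddMonoid.exponent G : ℝ) * Real.log d := log_key_ineq hd2R hdleQ
        have hb1 : ((d:ℝ) - 1) ≤ (AddMonoid.exponent G : ℝ) * Real.log d / Real.log (AddMonoid.exponent G : ℝ) := by
          rw [le_div_iff₀ hlogQ]
          linarith
        have hidxH'pos : 0 < H'.index := Nat.pos_of_ne_zero AddSubgroup.index_ne_zero_of_finite
        have hidxR : ((d:ℝ) * H'.index) ≤ (H.index : ℝ) := by exact_mod_cast hidx
        have hmono : Real.log ((d:ℝ) * H'.index) ≤ Real.log H.index := by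
          apply Real.log_le_log (by positivity) hidxR
        have hlogmul : Real.log ((d:ℝ) * H'.index) = Real.log d + Real.log H'.index := by
          rw [Real.log_mul (by positivity) (by positivity)]
        have hcastk : ((k' + (d - 1) : ℕ) : ℝ) = (k' : ℝ) + ((d:ℝ) - 1) := by
          have : (1:ℕ) ≤ d := by omega
          push_cast [this]
          ring
        rw [hcastk]
        calc (k' : ℝ) + ((d:ℝ) - 1)
            ≤ (AddMonoid.exponent G : ℝ) * Real.log H'.index / Real.log (AddMonoid.exponent G : ℝ) + (AddMonoid.exponent G : ℝ) * Real.log d / Real.log (AddMonoid.exponent G : ℝ) := by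
              linarith [hk'bound]
          _ = (AddMonoid.exponent G : ℝ) * (Real.log d + Real.log H'.index) / Real.log (AddMonoid.exponent G : ℝ) := by ring
          _ = (AddMonoid.exponent G : ℝ) * Real.log ((d:ℝ) * H'.index) / Real.log (AddMonoid.exponent G : ℝ) := by rw [hlogmul]
          _ ≤ (AddMonoid.exponent G : ℝ) * Real.log H.index / Real.log (AddMonoid.exponent G : ℝ) := by
              gcongr
      · -- representation
        intro g
        obtain ⟨f', hf'S, hf'H⟩ := hk'rep g
        obtain ⟨c, hcd, hc⟩ := decomp (g - ∑ i, f' i) hf'H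
        classical
        refine ⟨Fin.append f' (fun j : Fin (d-1) => if (j:ℕ) < c then s else 0), ?_, ?_⟩
        · intro i
          refine Fin.addCases (fun i => ?_) (fun j => ?_) i
          · rw [Fin.append_left]; exact hf'S i
          · rw [Fin.append_right]
            split_ifs
            · exact hsS
            · exact h0
        · rw [Fin.sum_univ_add]
          simp only [Fin.append_left, Fin.append_right]
          have hsum2 : (∑ j : Fin (d-1), if ((j:ℕ) < c) then s else (0:G)) = c • s := by
            rw [Fin.sum_univ_eq_sum_range (fun j => if j < c then s else (0:G)) (d-1)]
            have hfilter : (Finset.range (d-1)).filter (fun j => j < c) = Finset.range c := by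
              ext j
              simp only [Finset.mem_filter, Finset.mem_range]
              omega
            rw [Finset.sum_ite, hfilter, Finset.sum_const, Finset.sum_const_zero, add_zero,
              Finset.card_range]
          rw [hsum2, sub_add_eq_sub_sub]
          exact hc

theorem sumset_fills_group (G : Type*) [AddCommGroup G] [Fintype G]
    (M q : ℕ) (hM : M = Fintype.card G) (hM2 : 2 ≤ M)
    (hq : q = AddMonoid.exponent G)
    (S : Set G) (h0 : (0 : G) ∈ S) (hgen : AddSubgroup.closure S = ⊤) :
    ∃ k : ℕ, 0 < k ∧ (k : ℝ) ≤ q * Real.log M / Real.log q ∧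
      ∀ g : G, ∃ f : Fin k → G, (∀ i, f i ∈ S) ∧ ∑ i, f i = g := by
  have hNT : Nontrivial G := Fintype.one_lt_card_iff_nontrivial.mp (by omega)
  obtain ⟨k, hkpos, hkb, hkrep⟩ :=
    sumset_key G S h0 hgen (Fintype.card G) ⊥ (Nat.sub_le _ _)
  refine ⟨k, hkpos bot_ne_top, ?_, ?_⟩
  · rw [AddSubgroup.index_bot, Nat.card_eq_fintype_card, ← hM, ← hq] at hkb
    exact hkb
  · intro g
    obtain ⟨f, hfS, hf⟩ := hkrep g
    rw [AddSubgroup.mem_bot, sub_eq_zero] at hf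
    exact ⟨f, hfS, hf.symm⟩
end

section
/- Let (N_i) be a sequence of positive integers and (ε_i) a sequence with values in (0,1) such that N_{i+1} ≥ 2·N_i/ε_i for all i ≥ 1. Then there exists an irrational real number α such that the distance from N_i·α to the nearest integer is at most ε_i for every i ≥ 1. -/
/-!
Choose integers `k i` so that the closed intervals of radius `ε i / N i` about `k i / N i` are
nested: since `N (i + 1) ≥ 2 N i / ε i`, replacing `k i * N (i + 1) / N i` by either of the two
integers `⌊·⌋`, `⌊·⌋ + 1` moves the centre by at most `1 / N (i + 1)`, which keeps the next interval
inside the previous one. Every `α` in the intersection has `‖N i α‖ ≤ ε i`. The choice between the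
two integers diagonalises against an enumeration of `ℚ`: taking the one farther from `q N (i + 1)`
leaves `q` at distance `≥ 1 / (2 N (i + 1))` from the centre, and doing this again at the next
step, where the scale grows by the factor `N (i + 2) / N (i + 1) ≥ 2 / ε (i + 1)`, puts `q` at
distance `> ε (i + 2) / N (i + 2)` from the centre, so `α ≠ q`.
-/

open Metric

theorem exists_forall_mem_closedBall_of_dist_succ_le {X : Type*} [PseudoMetricSpace X]
    [ProperSpace X] {c : ℕ → X} {r : ℕ → ℝ} (hr : ∀ i, 0 ≤ r i)
    (h : ∀ i, dist (c (i + 1)) (c i) ≤ r i - r (i + 1)) :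
    ∃ x, ∀ i, x ∈ closedBall (c i) (r i) := by
  have hsub : ∀ i, closedBall (c (i + 1)) (r (i + 1)) ⊆ closedBall (c i) (r i) :=
    fun i => closedBall_subset_closedBall' (by linarith [h i])
  obtain ⟨x, hx⟩ := IsCompact.nonempty_iInter_of_sequence_nonempty_isCompact_isClosed _ hsub
    (fun i => nonempty_closedBall.2 (hr i)) (isCompact_closedBall _ _) fun _ => isClosed_closedBall
  exact ⟨x, Set.mem_iInter.1 hx⟩

noncomputable def roundAwayFrom (x y : ℝ) : ℤ :=
  if y ≤ ⌊x⌋ + 1 / 2 then ⌊x⌋ + 1 else ⌊x⌋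

theorem abs_roundAwayFrom_sub_le_one (x y : ℝ) : |(roundAwayFrom x y : ℝ) - x| ≤ 1 := by
  have := Int.floor_le x
  have := Int.lt_floor_add_one x
  unfold roundAwayFrom
  split_ifs <;> push_cast <;> rw [abs_le] <;> constructor <;> linarith

theorem one_half_le_abs_roundAwayFrom_sub (x y : ℝ) : 1 / 2 ≤ |(roundAwayFrom x y : ℝ) - y| := by
  unfold roundAwayFrom
  split_ifs with h <;> push_cast
  · exact le_abs.2 (Or.inl (by linarith))
  · exact le_abs.2 (Or.inr (by linarith))

theorem abs_sub_le_abs_roundAwayFrom_sub (x y : ℝ) : |x - y| ≤ |(roundAwayFrom x y : ℝ) - y| := by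
  have := Int.floor_le x
  have := Int.lt_floor_add_one x
  unfold roundAwayFrom
  split_ifs with h <;> push_cast
  · exact (abs_le.2 ⟨by linarith, by linarith⟩).trans (le_abs_self _)
  · exact (abs_le.2 ⟨by linarith, by linarith⟩).trans (neg_le_abs _)

section

variable {N : ℕ → ℕ} {ε t : ℕ → ℝ}

/-- The integers `k i` of the proof idea, with `t i` the point avoided at step `i`. -/
noncomputable def approxNumerator (N : ℕ → ℕ) (t : ℕ → ℝ) : ℕ → ℤ
  | 0 => 0
  | i + 1 => roundAwayFrom (approxNumerator N t i * N (i + 1) / N i) (t i * N (i + 1))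

theorem abs_approxNumerator_div_succ_sub_le (hN : ∀ i, 0 < N i) (hε_le : ∀ i, ε i ≤ 1)
    (hgrowth : ∀ i, 2 * (N i : ℝ) ≤ ε i * N (i + 1)) (i : ℕ) :
    |(approxNumerator N t (i + 1) : ℝ) / N (i + 1) - approxNumerator N t i / N i|
      ≤ ε i / N i - ε (i + 1) / N (i + 1) := by
  have hn : (0 : ℝ) < N i := Nat.cast_pos.2 (hN i)
  have hn' : (0 : ℝ) < N (i + 1) := Nat.cast_pos.2 (hN (i + 1))
  have hstep := abs_roundAwayFrom_sub_le_one (approxNumerator N t i * N (i + 1) / N i)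
    (t i * N (i + 1))
  rw [← approxNumerator] at hstep
  have hdiff : (approxNumerator N t (i + 1) : ℝ) / N (i + 1) - approxNumerator N t i / N i
      = (approxNumerator N t (i + 1) - approxNumerator N t i * N (i + 1) / N i) / N (i + 1) := by
    field_simp
  have hradius : 1 + ε (i + 1) ≤ ε i * N (i + 1) / N i := by
    rw [le_div_iff₀ hn]
    nlinarith [hgrowth i, hε_le (i + 1)]
  rw [hdiff, abs_div, abs_of_pos hn', div_le_iff₀ hn', sub_mul, div_mul_cancel₀ _ hn'.ne',
    div_mul_eq_mul_div]
  linarith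

theorem exists_forall_abs_mul_sub_approxNumerator_le (hN : ∀ i, 0 < N i) (hε_le : ∀ i, ε i ≤ 1)
    (hgrowth : ∀ i, 2 * (N i : ℝ) ≤ ε i * N (i + 1)) :
    ∃ α : ℝ, ∀ i, |N i * α - approxNumerator N t i| ≤ ε i := by
  have hn : ∀ i, (0 : ℝ) < N i := fun i => Nat.cast_pos.2 (hN i)
  have hε0 : ∀ i, 0 ≤ ε i := fun i =>
    (pos_of_mul_pos_left ((mul_pos two_pos (hn i)).trans_le (hgrowth i)) (hn _).le).le
  obtain ⟨α, hα⟩ := exists_forall_mem_closedBall_of_dist_succ_le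
    (c := fun i => (approxNumerator N t i : ℝ) / N i) (r := fun i => ε i / N i)
    (fun i => div_nonneg (hε0 i) (hn i).le) (abs_approxNumerator_div_succ_sub_le hN hε_le hgrowth)
  refine ⟨α, fun i => ?_⟩
  have hαi : |α - approxNumerator N t i / N i| ≤ ε i / N i := hα i
  calc |N i * α - approxNumerator N t i| = N i * |α - approxNumerator N t i / N i| := by
        rw [← abs_of_pos (hn i), ← abs_mul, abs_of_pos (hn i), mul_sub,
          mul_div_cancel₀ _ (hn i).ne']
    _ ≤ N i * (ε i / N i) := by gcongr
    _ = ε i := mul_div_cancel₀ _ (hn i).ne'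

theorem abs_approxNumerator_sub_mul_div_le {i : ℕ} (hN : 0 < N i) :
    |approxNumerator N t i - t i * N i| * N (i + 1) / N i
      ≤ |approxNumerator N t (i + 1) - t i * N (i + 1)| := by
  calc |approxNumerator N t i - t i * N i| * N (i + 1) / N i
        = |approxNumerator N t i - t i * N i| * |(N (i + 1) : ℝ)| / |(N i : ℝ)| := by
          rw [Nat.abs_cast, Nat.abs_cast]
    _ = |approxNumerator N t i * N (i + 1) / N i - t i * N (i + 1)| := by
          rw [← abs_mul, ← abs_div]
          congr 1
          field_simp
    _ ≤ _ := abs_sub_le_abs_roundAwayFrom_sub _ _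

theorem lt_abs_approxNumerator_sub (hN : ∀ i, 0 < N i) (hε_lt : ∀ i, ε i < 1)
    (hgrowth : ∀ i, 2 * (N i : ℝ) ≤ ε i * N (i + 1)) {i : ℕ} (ht : t (i + 1) = t i) :
    ε (i + 2) < |approxNumerator N t (i + 2) - t i * N (i + 2)| := by
  have hn : (0 : ℝ) < N (i + 1) := Nat.cast_pos.2 (hN (i + 1))
  have hhalf : 1 / 2 ≤ |(approxNumerator N t (i + 1) : ℝ) - t i * N (i + 1)| :=
    one_half_le_abs_roundAwayFrom_sub _ _
  calc ε (i + 2) < 1 := hε_lt _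
    _ ≤ 1 / 2 * N (i + 2) / N (i + 1) := by
        rw [le_div_iff₀ hn]
        nlinarith [hgrowth (i + 1), hε_lt (i + 1)]
    _ ≤ |approxNumerator N t (i + 1) - t (i + 1) * N (i + 1)| * N (i + 2) / N (i + 1) := by
        rw [ht]
        gcongr
    _ ≤ |approxNumerator N t (i + 2) - t i * N (i + 2)| := by
        rw [← ht]
        exact abs_approxNumerator_sub_mul_div_le (hN _)

end

theorem exists_irrational_good_approx (N : ℕ → ℕ) (ε : ℕ → ℝ)
    (hN : ∀ i, 0 < N i) (hε : ∀ i, ε i ∈ Set.Ioo (0 : ℝ) 1)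
    (hrec : ∀ i, (N (i + 1) : ℝ) ≥ 2 * N i / ε i) :
    ∃ α : ℝ, Irrational α ∧ ∀ i, |(N i : ℝ) * α - round ((N i : ℝ) * α)| ≤ ε i := by
  have hgrowth : ∀ i, 2 * (N i : ℝ) ≤ ε i * N (i + 1) := fun i => by
    have := hrec i
    rw [ge_iff_le, div_le_iff₀ (hε i).1] at this
    linarith
  -- every rational is targeted at two consecutive steps
  let t : ℕ → ℝ := fun i => ((Denumerable.eqv ℚ).symm (i / 2) : ℝ)
  obtain ⟨α, hα⟩ := exists_forall_abs_mul_sub_approxNumerator_le (t := t) hN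
    (fun i => (hε i).2.le) hgrowth
  refine ⟨α, ?_, fun i => (round_le _ _).trans (hα i)⟩
  rintro ⟨q, rfl⟩
  obtain ⟨m, hm⟩ := (Denumerable.eqv ℚ).symm.surjective q
  have hti : t (2 * m) = q := by simp only [t, Nat.mul_div_cancel_left _ two_pos, hm]
  have hsucc : t (2 * m + 1) = t (2 * m) := by
    simp only [t]
    rw [show (2 * m + 1) / 2 = 2 * m / 2 by omega]
  have hexcl := lt_abs_approxNumerator_sub hN (fun i => (hε i).2) hgrowth hsucc
  rw [hti, abs_sub_comm, mul_comm (q : ℝ)] at hexcl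
  exact (hα (2 * m + 2)).not_gt hexcl
end

section
/- For every natural number n, the integer ⌊⌊√2·n⌋ · 2√2 · n⌋ − ⌊√2·n⌋² − 2n² + 1 equals 1 if n = 0, and equals 0 if n ≥ 1. -/
/-- Since `2 ⌊x⌋ x = ⌊x⌋² + x² - (fract x)²` and `0 < (fract x)² < 1`. -/
theorem Int.floor_two_mul_floor_mul_self_of_sq_eq {x : ℝ} {k : ℤ} (hk : x ^ 2 = k)
    (hx : Int.fract x ≠ 0) : ⌊2 * ⌊x⌋ * x⌋ = ⌊x⌋ ^ 2 + k - 1 := by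
  have hpos : 0 < Int.fract x := (Int.fract_nonneg x).lt_of_ne' hx
  have hlt : Int.fract x < 1 := Int.fract_lt_one x
  have hid : 2 * ⌊x⌋ * x = (⌊x⌋ : ℝ) ^ 2 + x ^ 2 - Int.fract x ^ 2 := by
    rw [Int.fract]; ring
  rw [Int.floor_eq_iff, hid, hk]
  push_cast
  constructor <;> nlinarith

theorem haland_knutson_indicator (n : ℕ) :
    ⌊(⌊Real.sqrt 2 * n⌋ : ℝ) * 2 * Real.sqrt 2 * n⌋ - ⌊Real.sqrt 2 * n⌋ ^ 2
        - 2 * (n : ℤ) ^ 2 + 1 = if n = 0 then 1 else 0 := by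
  rcases eq_or_ne n 0 with rfl | hn
  · simp
  have hsq : (Real.sqrt 2 * n) ^ 2 = ((2 * (n : ℤ) ^ 2 : ℤ) : ℝ) := by
    rw [mul_pow, Real.sq_sqrt zero_le_two]; push_cast; ring
  have hirr : Irrational (Real.sqrt 2 * n) := irrational_sqrt_two.mul_natCast hn
  have hfract : Int.fract (Real.sqrt 2 * n) ≠ 0 :=
    Int.fract_ne_zero_iff.2 fun ⟨z, hz⟩ ↦ hirr.ne_int z hz.symm
  have hfloor := Int.floor_two_mul_floor_mul_self_of_sq_eq hsq hfract
  rw [show (⌊Real.sqrt 2 * n⌋ : ℝ) * 2 * Real.sqrt 2 * n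
      = 2 * ⌊Real.sqrt 2 * n⌋ * (Real.sqrt 2 * n) by ring, hfloor, if_neg hn]
  ring
end

section
/- There exists a constant c > 0 such that for all integers n, m not both zero, the distance from n·√2 + m·√3 to the nearest integer satisfies ‖n√2 + m√3‖ ≥ c / max(|n|, |m|, 1)³. (One may take c = 1/1000.) -/
/-- Helper: if `d` is not a perfect square, then `t² = d·s²` has no solution with `s ≠ 0`. -/
lemma aux_no_sq_sol (d : ℕ) (hd : ¬IsSquare d) (s t : ℤ) (hs : s ≠ 0)
    (h : t ^ 2 = (d : ℤ) * s ^ 2) : False := by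
  have hirr : Irrational (Real.sqrt d) := irrational_sqrt_natCast_iff.mpr hd
  apply hirr
  refine ⟨|(t : ℚ) / (s : ℚ)|, ?_⟩
  have hsR : (s : ℝ) ≠ 0 := Int.cast_ne_zero.mpr hs
  have hsq : ((t : ℝ) / (s : ℝ)) ^ 2 = (d : ℝ) := by
    have hR : (t : ℝ) ^ 2 = (d : ℝ) * (s : ℝ) ^ 2 := by exact_mod_cast congrArg (Int.cast : ℤ → ℝ) h
    field_simp
    linarith [hR]
  rw [← hsq, Real.sqrt_sq_eq_abs]
  push_cast
  ring

lemma aux_not_sq_2 : ¬ IsSquare (2 : ℕ) := by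
  rintro ⟨r, hr⟩
  have : r ≤ 2 := by nlinarith
  interval_cases r <;> omega

lemma aux_not_sq_3 : ¬ IsSquare (3 : ℕ) := by
  rintro ⟨r, hr⟩
  have : r ≤ 3 := by nlinarith
  interval_cases r <;> omega

lemma aux_not_sq_24 : ¬ IsSquare (24 : ℕ) := by
  rintro ⟨r, hr⟩
  have : r ≤ 24 := by nlinarith
  interval_cases r <;> omega

theorem sqrt2_sqrt3_diophantine :
    ∃ c : ℝ, 0 < c ∧ ∀ n m : ℤ, ¬(n = 0 ∧ m = 0) →
      |(n : ℝ) * Real.sqrt 2 + (m : ℝ) * Real.sqrt 3 -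
          round ((n : ℝ) * Real.sqrt 2 + (m : ℝ) * Real.sqrt 3)| ≥
        c / (max (max |n| |m|) 1 : ℤ) ^ 3 := by
  refine ⟨1 / 343, by norm_num, ?_⟩
  intro n m hnm
  set a := Real.sqrt 2 with ha
  set b := Real.sqrt 3 with hb
  have ha2 : a ^ 2 = 2 := Real.sq_sqrt (by norm_num)
  have hb2 : b ^ 2 = 3 := Real.sq_sqrt (by norm_num)
  have ha0 : 0 ≤ a := Real.sqrt_nonneg _
  have hb0 : 0 ≤ b := Real.sqrt_nonneg _
  have haU : a ≤ 1.42 := by nlinarith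
  have hbU : b ≤ 1.74 := by nlinarith
  set M : ℤ := max (max |n| |m|) 1 with hMdef
  have hM1 : (1 : ℤ) ≤ M := le_max_right _ _
  have hnM : |n| ≤ M := le_trans (le_max_left _ _) (le_max_left _ _)
  have hmM : |m| ≤ M := le_trans (le_max_right _ _) (le_max_left _ _)
  have hM1R : (1 : ℝ) ≤ (M : ℝ) := by exact_mod_cast hM1
  have hM0R : (0 : ℝ) ≤ (M : ℝ) := le_trans zero_le_one hM1R
  have hnMR : |(n : ℝ)| ≤ (M : ℝ) := by
    rw [← Int.cast_abs]; exact_mod_cast hnM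
  have hmMR : |(m : ℝ)| ≤ (M : ℝ) := by
    rw [← Int.cast_abs]; exact_mod_cast hmM
  have hna : |(n : ℝ)| * a ≤ (M : ℝ) * 1.42 := mul_le_mul hnMR haU ha0 hM0R
  have hmb : |(m : ℝ)| * b ≤ (M : ℝ) * 1.74 := mul_le_mul hmMR hbU hb0 hM0R
  set x : ℝ := (n : ℝ) * a + (m : ℝ) * b with hx
  set k : ℤ := round x with hk
  -- the norm
  set N : ℤ := (k ^ 2 - 2 * n ^ 2 - 3 * m ^ 2) ^ 2 - 24 * n ^ 2 * m ^ 2 with hNdef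
  have expand : ∀ K A B : ℝ, (K - A - B) * (K - A + B) * ((K + A - B) * (K + A + B)) =
      (K ^ 2 - A ^ 2 - B ^ 2) ^ 2 - 4 * A ^ 2 * B ^ 2 := fun K A B => by ring
  have hNeq : ((k : ℝ) - n * a - m * b) * ((k : ℝ) - n * a + m * b) *
      (((k : ℝ) + n * a - m * b) * ((k : ℝ) + n * a + m * b)) = (N : ℝ) := by
    rw [expand (k : ℝ) ((n : ℝ) * a) ((m : ℝ) * b)]
    have h1 : ((n : ℝ) * a) ^ 2 = 2 * (n : ℝ) ^ 2 := by rw [mul_pow, ha2]; ring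
    have h2 : ((m : ℝ) * b) ^ 2 = 3 * (m : ℝ) ^ 2 := by rw [mul_pow, hb2]; ring
    rw [h1, h2, hNdef]
    push_cast
    ring
  -- N is nonzero
  have hN0 : N ≠ 0 := by
    intro h0
    have h0' : (k ^ 2 - 2 * n ^ 2 - 3 * m ^ 2) ^ 2 = (24 : ℤ) * (n * m) ^ 2 := by
      rw [hNdef] at h0; ring_nf at h0 ⊢; linarith
    by_cases hnm0 : n * m = 0
    · rcases mul_eq_zero.mp hnm0 with hn0 | hm0
      · have hm : m ≠ 0 := fun hm => hnm ⟨hn0, hm⟩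
        have hkm : k ^ 2 = (3 : ℤ) * m ^ 2 := by
          rw [hn0] at h0'
          nlinarith [h0']
        exact aux_no_sq_sol 3 aux_not_sq_3 m k hm (by exact_mod_cast hkm)
      · have hn : n ≠ 0 := fun hn => hnm ⟨hn, hm0⟩
        have hkn : k ^ 2 = (2 : ℤ) * n ^ 2 := by
          rw [hm0] at h0'
          nlinarith [h0']
        exact aux_no_sq_sol 2 aux_not_sq_2 n k hn (by exact_mod_cast hkn)
    · exact aux_no_sq_sol 24 aux_not_sq_24 (n * m) (k ^ 2 - 2 * n ^ 2 - 3 * m ^ 2) hnm0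
        (by exact_mod_cast h0')
  have hN1 : (1 : ℝ) ≤ |(N : ℝ)| := by
    rw [← Int.cast_abs]
    exact_mod_cast Int.one_le_abs hN0
  -- bounds on the conjugate factors
  have hkb : |(k : ℝ)| ≤ (M : ℝ) * 1.42 + (M : ℝ) * 1.74 + 1 / 2 := by
    have h1 : |(k : ℝ) - x| ≤ 1 / 2 := by
      rw [abs_sub_comm]; exact abs_sub_round x
    have h2 : |x| ≤ (M : ℝ) * 1.42 + (M : ℝ) * 1.74 := by
      calc |x| ≤ |(n : ℝ) * a| + |(m : ℝ) * b| := abs_add_le _ _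
        _ = |(n : ℝ)| * a + |(m : ℝ)| * b := by
            rw [abs_mul, abs_mul, abs_of_nonneg ha0, abs_of_nonneg hb0]
        _ ≤ (M : ℝ) * 1.42 + (M : ℝ) * 1.74 := by linarith
    calc |(k : ℝ)| = |((k : ℝ) - x) + x| := by ring_nf
      _ ≤ |(k : ℝ) - x| + |x| := abs_add_le _ _
      _ ≤ (M : ℝ) * 1.42 + (M : ℝ) * 1.74 + 1 / 2 := by linarith
  have hfac : ∀ s t : ℝ, |s| = 1 → |t| = 1 →
      |(k : ℝ) + s * ((n : ℝ) * a) + t * ((m : ℝ) * b)| ≤ 7 * (M : ℝ) := by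
    intro s t hsabs htabs
    calc |(k : ℝ) + s * ((n : ℝ) * a) + t * ((m : ℝ) * b)|
        ≤ |(k : ℝ)| + |s * ((n : ℝ) * a)| + |t * ((m : ℝ) * b)| := abs_add_three _ _ _
      _ = |(k : ℝ)| + |(n : ℝ)| * a + |(m : ℝ)| * b := by
          rw [abs_mul, abs_mul, abs_mul, abs_mul, hsabs, htabs,
            abs_of_nonneg ha0, abs_of_nonneg hb0]; ring
      _ ≤ 7 * (M : ℝ) := by linarith
  have hf2 : |(k : ℝ) - n * a + m * b| ≤ 7 * (M : ℝ) := by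
    have h := hfac (-1) 1 (by norm_num) (by norm_num)
    rw [show (k : ℝ) + (-1) * ((n : ℝ) * a) + 1 * ((m : ℝ) * b)
        = (k : ℝ) - n * a + m * b by ring] at h
    exact h
  have hf3 : |(k : ℝ) + n * a - m * b| ≤ 7 * (M : ℝ) := by
    have h := hfac 1 (-1) (by norm_num) (by norm_num)
    rw [show (k : ℝ) + 1 * ((n : ℝ) * a) + (-1) * ((m : ℝ) * b)
        = (k : ℝ) + n * a - m * b by ring] at h
    exact h
  have hf4 : |(k : ℝ) + n * a + m * b| ≤ 7 * (M : ℝ) := by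
    have h := hfac 1 1 (by norm_num) (by norm_num)
    rw [show (k : ℝ) + 1 * ((n : ℝ) * a) + 1 * ((m : ℝ) * b)
        = (k : ℝ) + n * a + m * b by ring] at h
    exact h
  have hb7 : (0 : ℝ) ≤ 7 * (M : ℝ) := by linarith
  have hf1 : |(k : ℝ) - n * a - m * b| = |x - (k : ℝ)| := by
    rw [show (k : ℝ) - n * a - m * b = -(x - (k : ℝ)) by rw [hx]; ring, abs_neg]
  -- combine
  have hP1 : |(k : ℝ) + n * a - m * b| * |(k : ℝ) + n * a + m * b|
      ≤ (7 * (M : ℝ)) * (7 * (M : ℝ)) := mul_le_mul hf3 hf4 (abs_nonneg _) hb7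
  have hP2 : |(k : ℝ) - n * a + m * b| * (|(k : ℝ) + n * a - m * b| * |(k : ℝ) + n * a + m * b|)
      ≤ (7 * (M : ℝ)) * ((7 * (M : ℝ)) * (7 * (M : ℝ))) :=
    mul_le_mul hf2 hP1 (by positivity) hb7
  have hprodeq : |(N : ℝ)| = |x - (k : ℝ)| * (|(k : ℝ) - n * a + m * b| *
      (|(k : ℝ) + n * a - m * b| * |(k : ℝ) + n * a + m * b|)) := by
    rw [← hf1, ← abs_mul, ← abs_mul, ← abs_mul, ← hNeq]
    ring_nf
  have hprod : (1 : ℝ) ≤ |x - (k : ℝ)| * (343 * (M : ℝ) ^ 3) := by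
    have step : |x - (k : ℝ)| * (|(k : ℝ) - n * a + m * b| *
        (|(k : ℝ) + n * a - m * b| * |(k : ℝ) + n * a + m * b|))
        ≤ |x - (k : ℝ)| * ((7 * (M : ℝ)) * ((7 * (M : ℝ)) * (7 * (M : ℝ)))) :=
      mul_le_mul_of_nonneg_left hP2 (abs_nonneg _)
    have heq : (7 * (M : ℝ)) * ((7 * (M : ℝ)) * (7 * (M : ℝ))) = 343 * (M : ℝ) ^ 3 := by ring
    rw [heq] at step
    calc (1 : ℝ) ≤ |(N : ℝ)| := hN1
      _ = _ := hprodeq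
      _ ≤ |x - (k : ℝ)| * (343 * (M : ℝ) ^ 3) := step
  have hM3 : (0 : ℝ) < (M : ℝ) ^ 3 := by positivity
  have goal' : |x - (k : ℝ)| ≥ (1 / 343) / (M : ℝ) ^ 3 := by
    rw [ge_iff_le, div_le_iff₀ hM3]
    have h343 : |x - (k : ℝ)| * (343 * (M : ℝ) ^ 3) = 343 * (|x - (k : ℝ)| * (M : ℝ) ^ 3) := by
      ring
    rw [h343] at hprod
    linarith
  have hcast : ((M : ℤ) : ℝ) ^ 3 = (M : ℝ) ^ 3 := by norm_num
  calc |x - (k : ℝ)| ≥ (1 / 343) / (M : ℝ) ^ 3 := goal'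
    _ = (1 / 343) / ((M : ℤ) : ℝ) ^ 3 := by rw [hcast]
end

section
/- For each dimension d ≥ 1 there is a constant C_d > 0 with the following property: for every α ∈ ℝ^d, every ε > 0, and every positive integer N, there exists a subgroup Λ of ℤ^d such that R_N(α, ε) ⊆ Λ ∩ (−N, N)^d ⊆ R_N(α, C_d·N^d·ε), where R_N(α, ε) = { n ∈ ℤ^d : ‖n‖_∞ < N and |Σ_{i=1}^d n_i α_i| < ε }. -/
/-!
Take `Λ` to be the set of integer vectors in the real span of `R_N(α, ε)`. Choose a maximal
linearly independent family `v₁, …, v_r` (`r ≤ d`) in `R_N(α, ε)`. An integer vector `n` of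
`Λ` in the box is `∑ cₖ vₖ`; restricting to `r` coordinates on which the `vₖ` form an
invertible integer matrix, Cramer's rule gives `|cₖ| ≤ r! N^r`: the numerator is a determinant
with entries bounded by `N`, the denominator a nonzero integer. Hence
`|⟨n, α⟩| ≤ ∑ |cₖ| |⟨vₖ, α⟩| ≤ d · d! N^d ε`.
-/

open Matrix Finset

namespace Matrix

theorem exists_det_submatrix_ne_zero_of_linearIndependent_row {K m n : Type*} [Field K]
    [Fintype m] [DecidableEq m] [Fintype n] (A : Matrix m n K) (hA : LinearIndependent K A.row) :
    ∃ g : m → n, (A.submatrix id g).det ≠ 0 := by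
  have hspan : Submodule.span K (Set.range A.col) = ⊤ := Submodule.eq_top_of_finrank_eq <| by
    rw [← rank_eq_finrank_span_cols, hA.rank_matrix, Module.finrank_fintype_fun_eq_card]
  obtain ⟨κ, a, -, hκspan, hκ⟩ := exists_linearIndependent' K A.col
  have : Fintype κ := @Fintype.ofFinite κ hκ.finite
  obtain ⟨e⟩ : Nonempty (m ≃ κ) := Fintype.card_eq.mp <| by
    rw [linearIndependent_iff_card_eq_finrank_span.mp hκ, Set.finrank, hκspan, hspan,
      finrank_top, Module.finrank_fintype_fun_eq_card]
  refine ⟨a ∘ e, ?_⟩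
  rw [← det_transpose, ← isUnit_iff_ne_zero, ← isUnit_iff_isUnit_det]
  exact linearIndependent_rows_iff_isUnit.mp (hκ.comp e e.injective)

theorem abs_le_factorial_mul_pow_of_one_le_abs_det {K n : Type*} [Field K] [LinearOrder K]
    [IsStrictOrderedRing K] [Fintype n] [DecidableEq n] {A : Matrix n n K} (hdet : 1 ≤ |A.det|)
    {N : K} (hA : ∀ i j, |A i j| ≤ N) {c : n → K} (hc : ∀ i, |(A *ᵥ c) i| ≤ N) (k : n) :
    |c k| ≤ (Fintype.card n).factorial * N ^ Fintype.card n := by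
  have hcramer : A.det * c k = (A.updateCol k (A *ᵥ c)).det := by
    rw [← cramer_apply, cramer_eq_adjugate_mulVec, mulVec_mulVec, adjugate_mul, smul_mulVec,
      one_mulVec, Pi.smul_apply, smul_eq_mul]
  have hentries : ∀ i j, |A.updateCol k (A *ᵥ c) i j| ≤ N := by
    intro i j
    rw [updateCol_apply]
    split_ifs
    exacts [hc i, hA i j]
  calc |c k| ≤ |A.det| * |c k| := le_mul_of_one_le_left (abs_nonneg _) hdet
    _ = |(A.updateCol k (A *ᵥ c)).det| := by rw [← abs_mul, hcramer]
    _ ≤ (Fintype.card n).factorial * N ^ Fintype.card n := by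
      simpa only [nsmul_eq_mul, AbsoluteValue.abs_apply] using
        det_le (abv := AbsoluteValue.abs) hentries

end Matrix

theorem abs_le_of_intCast_eq_sum_smul {m ι : Type*} [Fintype m] [DecidableEq m] [Fintype ι]
    {v : m → ι → ℤ} (hv : LinearIndependent ℝ fun k i ↦ (v k i : ℝ)) {N : ℝ}
    (hvN : ∀ k i, |(v k i : ℝ)| ≤ N) {y : ι → ℤ} (hyN : ∀ i, |(y i : ℝ)| ≤ N) {c : m → ℝ}
    (hc : ∑ k, c k • (fun i ↦ (v k i : ℝ)) = fun i ↦ (y i : ℝ)) (k : m) :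
    |c k| ≤ (Fintype.card m).factorial * N ^ Fintype.card m := by
  obtain ⟨g, hg⟩ := exists_det_submatrix_ne_zero_of_linearIndependent_row
    (of fun k i ↦ (v k i : ℝ)) hv
  set M : Matrix m m ℤ := ((of v).submatrix id g)ᵀ
  have hMcast : M.map (Int.cast : ℤ → ℝ) = ((of fun k i ↦ (v k i : ℝ)).submatrix id g)ᵀ := rfl
  have hMdet : (M.det : ℝ) = ((of fun k i ↦ (v k i : ℝ)).submatrix id g).det := by
    rw [Int.cast_det, hMcast, det_transpose]
  have hdet : 1 ≤ |(M.map (Int.cast : ℤ → ℝ)).det| := by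
    rw [← Int.cast_det]
    exact_mod_cast Int.one_le_abs fun h ↦ hg (by rw [← hMdet, h, Int.cast_zero])
  have hMc : ∀ i, (M.map (Int.cast : ℤ → ℝ) *ᵥ c) i = y (g i) := by
    intro i
    rw [← congrFun hc (g i)]
    simp [mulVec, dotProduct, Finset.sum_apply, mul_comm, M]
  exact abs_le_factorial_mul_pow_of_one_le_abs_det hdet (fun i j ↦ hvN j (g i))
    (fun i ↦ (hMc i).symm ▸ hyN (g i)) k

def realSpanLattice {ι : Type*} (S : Set (ι → ℤ)) : AddSubgroup (ι → ℤ) :=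
  (Submodule.span ℝ ((Int.castAddHom ℝ).compLeft ι '' S)).toAddSubgroup.comap
    ((Int.castAddHom ℝ).compLeft ι)

theorem subset_realSpanLattice {ι : Type*} (S : Set (ι → ℤ)) : S ⊆ realSpanLattice S :=
  fun s hs ↦ Submodule.subset_span ⟨s, hs, rfl⟩

theorem abs_sum_mul_le_of_mem_realSpanLattice {ι : Type*} [Fintype ι] {S : Set (ι → ℤ)}
    {α : ι → ℝ} {N ε : ℝ} (hN : 1 ≤ N) (hε : 0 ≤ ε)
    (hS : ∀ s ∈ S, (∀ i, |(s i : ℝ)| ≤ N) ∧ |∑ i, (s i : ℝ) * α i| ≤ ε)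
    {n : ι → ℤ} (hn : n ∈ realSpanLattice S) (hnN : ∀ i, |(n i : ℝ)| ≤ N) :
    |∑ i, (n i : ℝ) * α i| ≤
      Fintype.card ι * ((Fintype.card ι).factorial * N ^ Fintype.card ι * ε) := by
  classical
  obtain ⟨κ, a, -, hspan, hli⟩ :=
    exists_linearIndependent' ℝ fun s : S ↦ (Int.castAddHom ℝ).compLeft ι s
  have : Fintype κ := @Fintype.ofFinite κ hli.finite
  have hcard : Fintype.card κ ≤ Fintype.card ι := by
    simpa using hli.fintype_card_le_finrank
  have hn' : (Int.castAddHom ℝ).compLeft ι n ∈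
      Submodule.span ℝ (Set.range ((fun s : S ↦ (Int.castAddHom ℝ).compLeft ι s) ∘ a)) := by
    rw [hspan, ← Set.image_eq_range]
    exact hn
  obtain ⟨c, hc⟩ := (Submodule.mem_span_range_iff_exists_fun ℝ).mp hn'
  have hcoeff : ∀ k, |c k| ≤ (Fintype.card ι).factorial * N ^ Fintype.card ι := fun k ↦
    (abs_le_of_intCast_eq_sum_smul hli (fun k i ↦ (hS _ (a k).2).1 i) hnN hc k).trans <| by
      gcongr
  have hsum : ∑ i, (n i : ℝ) * α i = ∑ k, c k * ∑ i, ((a k : ι → ℤ) i : ℝ) * α i := by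
    change (Int.castAddHom ℝ).compLeft ι n ⬝ᵥ α = _
    rw [← hc, sum_dotProduct]
    simp only [smul_dotProduct, smul_eq_mul]
    rfl
  rw [hsum]
  calc |∑ k, c k * ∑ i, ((a k : ι → ℤ) i : ℝ) * α i|
      ≤ ∑ k, |c k| * |∑ i, ((a k : ι → ℤ) i : ℝ) * α i| := by
        simpa only [abs_mul] using
          abs_sum_le_sum_abs (fun k ↦ c k * ∑ i, ((a k : ι → ℤ) i : ℝ) * α i) univ
    _ ≤ ∑ _k : κ, (Fintype.card ι).factorial * N ^ Fintype.card ι * ε := by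
        gcongr with k
        exacts [hcoeff k, (hS _ (a k).2).2]
    _ ≤ Fintype.card ι * ((Fintype.card ι).factorial * N ^ Fintype.card ι * ε) := by
        rw [sum_const, card_univ, nsmul_eq_mul]
        gcongr

theorem lattice_approximation_general (d : ℕ) :
    ∃ C : ℝ, 0 < C ∧ ∀ (α : Fin d → ℝ) (ε : ℝ), 0 < ε → ∀ N : ℕ, 0 < N →
      ∃ Λ : AddSubgroup (Fin d → ℤ),
        {n : Fin d → ℤ | (∀ i, |n i| < (N : ℤ)) ∧ |∑ i, (n i : ℝ) * α i| < ε} ⊆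
          (Λ : Set (Fin d → ℤ)) ∩ {n | ∀ i, |n i| < (N : ℤ)} ∧
        (Λ : Set (Fin d → ℤ)) ∩ {n | ∀ i, |n i| < (N : ℤ)} ⊆
          {n : Fin d → ℤ | (∀ i, |n i| < (N : ℤ)) ∧
            |∑ i, (n i : ℝ) * α i| < C * (N : ℝ) ^ d * ε} := by
  refine ⟨d * d.factorial + 1, by positivity, fun α ε hε N hN ↦ ?_⟩
  set R := {n : Fin d → ℤ | (∀ i, |n i| < (N : ℤ)) ∧ |∑ i, (n i : ℝ) * α i| < ε}
  have hbox {n : Fin d → ℤ} (h : ∀ i, |n i| < (N : ℤ)) (i : Fin d) : |(n i : ℝ)| ≤ N := by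
    exact_mod_cast (h i).le
  refine ⟨realSpanLattice R, fun n hn ↦ ⟨subset_realSpanLattice R hn, hn.1⟩,
    fun n ⟨hnΛ, hnN⟩ ↦ ⟨hnN, ?_⟩⟩
  have hbound := abs_sum_mul_le_of_mem_realSpanLattice (by exact_mod_cast hN) hε.le
    (fun s hs ↦ ⟨hbox hs.1, hs.2.le⟩) hnΛ (hbox hnN)
  rw [Fintype.card_fin] at hbound
  have : 0 < (N : ℝ) ^ d * ε := by positivity
  linarith

theorem lattice_approximation (d : ℕ) (hd : 1 ≤ d) :
    ∃ C : ℝ, 0 < C ∧ ∀ (α : Fin d → ℝ) (ε : ℝ), 0 < ε → ∀ N : ℕ, 0 < N →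
      ∃ Λ : AddSubgroup (Fin d → ℤ),
        {n : Fin d → ℤ | (∀ i, |n i| < (N : ℤ)) ∧ |∑ i, (n i : ℝ) * α i| < ε} ⊆
          (Λ : Set (Fin d → ℤ)) ∩ {n | ∀ i, |n i| < (N : ℤ)} ∧
        (Λ : Set (Fin d → ℤ)) ∩ {n | ∀ i, |n i| < (N : ℤ)} ⊆
          {n : Fin d → ℤ | (∀ i, |n i| < (N : ℤ)) ∧
            |∑ i, (n i : ℝ) * α i| < C * (N : ℝ) ^ d * ε} :=
  lattice_approximation_general d
end

section
/- Let d ≥ 1 and let α₁, …, α_d be real numbers such that 1, α₁, …, α_d are linearly independent over ℚ. For each i let a^{(i)} be the Sturmian word a^{(i)}_n = ⌊nα_i⌋ − ⌊(n−1)α_i⌋, and let a be the product word a_n = (a^{(1)}_n, …, a^{(d)}_n). Then for every N ≥ 1 the subword complexity of a equals p_a(N) = (N+1)^d. -/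
/-!
The length-`N` factor of the product word starting at `n` is determined, coordinate by
coordinate, by the phase `x = fract ((n - 1) α_i)`: its prefix sums are `⌊m α_i + x⌋`, and
for `0 ≤ x < 1` these jump exactly when `x` crosses one of the `N` thresholds
`1 - fract (m α_i)`, `1 ≤ m ≤ N`, which are distinct points of `(0, 1)` since `α_i` is
irrational. So a factor is encoded by the numbers of thresholds below the phases, a point of
`{0, …, N}^d`, and every point is attained because, by Kronecker's theorem, the phases
`fract (n α)` meet every open box of `[0, 1)^d`.

Kronecker's theorem is proved by Bohr's argument: if `n α - c` stayed `ε`-far from `ℤ^d` in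
some coordinate, then `ψ n = ∏ i, (1 + 𝐞 (n α_i - c_i))` would satisfy `‖ψ n‖² ≤ ρ 4^(d-1)`
with `ρ < 4`; but after a phase shift, `ψ n ^ (2j)` is an exponential sum in `n` whose constant
term has modulus `centralBinom j ^ d`, and averaging over `n` bounds that term by
`(ρ 4^(d-1))^j`, contradicting `centralBinom j ≈ 4^j`.
-/

open Finset Real
open scoped FourierTransform

namespace Finset

variable {α : Type*} [LinearOrder α]

theorem card_filter_le_eq_card_filter_le_iff {s : Finset α} {x y : α} :
    #{z ∈ s | z ≤ x} = #{z ∈ s | z ≤ y} ↔ ∀ z ∈ s, (z ≤ x ↔ z ≤ y) := by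
  refine ⟨fun h => ?_, fun h => by rw [filter_congr h]⟩
  wlog hxy : x ≤ y generalizing x y
  · exact fun z hz => (this h.symm (le_of_not_ge hxy) z hz).symm
  have hsub : {z ∈ s | z ≤ x} ⊆ {z ∈ s | z ≤ y} :=
    fun z hz => by
      rw [mem_filter] at hz ⊢
      exact ⟨hz.1, hz.2.trans hxy⟩
  have heq := eq_of_subset_of_card_le hsub h.ge
  intro z hz
  simpa [hz] using congrArg (z ∈ ·) heq

theorem exists_Ioo_card_filter_le_eq {s : Finset α} {a b : α} (hab : a < b)
    (hs : ∀ z ∈ s, z ∈ Set.Ioo a b) {t : ℕ} (ht : t ≤ #s) :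
    ∃ u v, a ≤ u ∧ u < v ∧ v ≤ b ∧ ∀ x ∈ Set.Ioo u v, #{z ∈ s | z ≤ x} = t := by
  induction s using Finset.induction_on_max generalizing b t with
  | empty => exact ⟨a, b, le_rfl, hab, le_rfl, fun x _ => by simp_all⟩
  | insert M s hM ih =>
    have hMs : M ∉ s := fun h => lt_irrefl M (hM M h)
    rw [card_insert_of_notMem hMs] at ht
    obtain ⟨haM, hMb⟩ := hs M (mem_insert_self M s)
    rcases ht.eq_or_lt with rfl | ht
    · refine ⟨M, b, haM.le, hMb, le_rfl, fun x hx => ?_⟩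
      rw [filter_true_of_mem fun z hz => ?_, card_insert_of_notMem hMs]
      rcases mem_insert.1 hz with rfl | hz
      exacts [hx.1.le, (hM z hz).le.trans hx.1.le]
    · obtain ⟨u, v, hau, huv, hvM, hcount⟩ := ih haM
        (fun z hz => ⟨(hs z (mem_insert_of_mem hz)).1, hM z hz⟩) (Nat.lt_succ_iff.1 ht)
      refine ⟨u, v, hau, huv, hvM.trans hMb.le, fun x hx => ?_⟩
      rw [filter_insert, if_neg (not_le.2 (hx.2.trans_le hvM)), hcount x hx]

end Finset

theorem Set.ncard_range_eq_ncard_range {ι β γ : Type*} {f : ι → β} {g : ι → γ}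
    (h : ∀ i j, f i = f j ↔ g i = g j) : (Set.range f).ncard = (Set.range g).ncard := by
  refine Set.ncard_congr (fun _ hy => g hy.choose) (fun _ _ => Set.mem_range_self _)
    (fun y y' hy hy' hg => ?_) ?_
  · rw [← hy.choose_spec, ← hy'.choose_spec]
    exact (h _ _).2 hg
  · rintro _ ⟨i, rfl⟩
    exact ⟨f i, Set.mem_range_self i, (h _ _).1 (Set.mem_range_self i).choose_spec⟩

theorem forall_lt_eq_iff_forall_le_sum_range_eq {M : Type*} [AddCommGroup M] {u v : ℕ → M}
    {N : ℕ} : (∀ k < N, u k = v k) ↔ ∀ m ≤ N, ∑ k ∈ range m, u k = ∑ k ∈ range m, v k := by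
  refine ⟨fun h m hm => sum_congr rfl fun k hk => h k ((mem_range.1 hk).trans_le hm),
    fun h k hk => ?_⟩
  have hsucc := h (k + 1) hk
  rw [sum_range_succ, sum_range_succ, h k hk.le] at hsucc
  exact add_left_cancel hsucc

theorem Int.floor_add_eq_ite {R : Type*} [Ring R] [LinearOrder R] [IsStrictOrderedRing R]
    [FloorRing R] (y : R) {x : R} (hx : x ∈ Set.Ico 0 1) :
    ⌊y + x⌋ = ⌊y⌋ + if 1 - Int.fract y ≤ x then 1 else 0 := by
  have hsplit : y + x = ⌊y⌋ + (Int.fract y + x) := by rw [Int.fract]; abel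
  rw [hsplit, Int.floor_intCast_add]
  split_ifs with h
  · have : ⌊Int.fract y + x⌋ = 1 := Int.floor_eq_iff.2
      ⟨by rw [Int.cast_one]; exact sub_le_iff_le_add'.1 h,
        by push_cast; exact add_lt_add (Int.fract_lt_one y) hx.2⟩
    rw [this]
  · have : ⌊Int.fract y + x⌋ = 0 := Int.floor_eq_zero_iff.2
      ⟨add_nonneg (Int.fract_nonneg y) hx.1, lt_sub_iff_add_lt'.1 (not_le.1 h)⟩
    rw [this, add_zero]

theorem AddChar.map_sum_eq_prod {A M ι : Type*} [AddCommMonoid A] [CommMonoid M]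
    (ψ : AddChar A M) (s : Finset ι) (f : ι → A) : ψ (∑ i ∈ s, f i) = ∏ i ∈ s, ψ (f i) := by
  classical
  induction s using Finset.induction_on with
  | empty => simp
  | insert i s hi ih => rw [sum_insert hi, prod_insert hi, map_add_eq_mul, ih]

namespace Real

theorem fourierChar_eq_one_iff {x : ℝ} : 𝐞 x = 1 ↔ ∃ z : ℤ, x = z := by
  rw [fourierChar_apply', Circle.exp_eq_one]
  refine exists_congr fun z => ?_
  constructor
  · intro h; nlinarith [pi_pos]
  · rintro rfl; ring

theorem norm_one_add_fourierChar_sq (θ : ℝ) :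
    ‖1 + (𝐞 θ : ℂ)‖ ^ 2 = 2 + 2 * cos (2 * π * θ) := by
  rw [fourierChar_apply, Complex.exp_mul_I, ← Complex.ofReal_cos, ← Complex.ofReal_sin,
    Complex.sq_norm, ← add_assoc, ← Complex.ofReal_one, ← Complex.ofReal_add,
    Complex.normSq_add_mul_I]
  nlinarith [sin_sq_add_cos_sq (2 * π * θ)]

theorem norm_one_add_fourierChar_sq_le {ε θ : ℝ} (hε0 : 0 ≤ ε) (hθ : ε ≤ |θ - round θ|) :
    ‖1 + (𝐞 θ : ℂ)‖ ^ 2 ≤ 2 + 2 * cos (2 * π * ε) := by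
  have hcos : cos (2 * π * θ) = cos (2 * π * |θ - round θ|) := by
    rw [show 2 * π * |θ - round θ| = |2 * π * (θ - round θ)| by
      rw [abs_mul, abs_of_pos (by positivity : (0 : ℝ) < 2 * π)], cos_abs,
      show 2 * π * θ = 2 * π * (θ - round θ) + (round θ : ℤ) * (2 * π) by ring,
      cos_add_int_mul_two_pi]
  have hround := abs_sub_round θ
  rw [norm_one_add_fourierChar_sq, hcos]
  gcongr
  refine cos_le_cos_of_nonneg_of_le_pi ?_ ?_ ?_ <;>
    nlinarith [pi_pos, abs_nonneg (θ - round θ)]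

theorem norm_one_add_fourierChar_le (θ : ℝ) : ‖1 + (𝐞 θ : ℂ)‖ ≤ 2 :=
  (norm_add_le _ _).trans (by rw [norm_one, Circle.norm_coe]; norm_num)

theorem prod_fourierChar {ι : Type*} (s : Finset ι) (f : ι → ℝ) :
    ∏ i ∈ s, (𝐞 (f i) : ℂ) = 𝐞 (∑ i ∈ s, f i) := by
  rw [AddChar.map_sum_eq_prod]
  exact (map_prod Circle.coeHom (fun i => 𝐞 (f i)) s).symm

theorem one_add_fourierChar_pow_mul (β γ : ℝ) (j n : ℕ) :
    (1 + (𝐞 (n * β - γ) : ℂ)) ^ (2 * j) * 𝐞 (-(j * (n * β))) =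
      ∑ m ∈ range (2 * j + 1),
        (2 * j).choose m * (𝐞 (-(m * γ)) : ℂ) * 𝐞 ((m - j) * β) ^ n := by
  rw [add_comm, add_pow, sum_mul]
  refine sum_congr rfl fun m _ => ?_
  have hphase : (𝐞 (n * β - γ) : ℂ) ^ m * 𝐞 (-(j * (n * β))) =
      𝐞 (-(m * γ)) * 𝐞 ((m - j) * β) ^ n := by
    simp only [← Circle.coe_pow, ← Circle.coe_mul, ← AddChar.map_nsmul_eq_pow,
      ← AddChar.map_add_eq_mul, nsmul_eq_mul]
    congr 2; ring
  rw [one_pow, mul_one, mul_right_comm, hphase]; ring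

end Real

theorem norm_geom_sum_le {ζ : ℂ} (hζ : ‖ζ‖ ≤ 1) (h1 : ζ ≠ 1) (M : ℕ) :
    ‖∑ n ∈ range M, ζ ^ n‖ ≤ 2 / ‖ζ - 1‖ := by
  rw [geom_sum_eq h1, norm_div]
  gcongr
  calc ‖ζ ^ M - 1‖ ≤ ‖ζ ^ M‖ + ‖(1 : ℂ)‖ := norm_sub_le _ _
    _ ≤ 2 := by rw [norm_pow, norm_one]; nlinarith [pow_le_one₀ (norm_nonneg ζ) hζ (n := M)]

theorem norm_le_of_forall_norm_sum_mul_pow_le {ι : Type*} {s : Finset ι} {b ζ : ι → ℂ}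
    {i₀ : ι} (hi₀ : i₀ ∈ s) (hζi₀ : ζ i₀ = 1) (hζ : ∀ i ∈ s, i ≠ i₀ → ‖ζ i‖ ≤ 1 ∧ ζ i ≠ 1)
    {R : ℝ}
    (hR : ∀ n : ℕ, ‖∑ i ∈ s, b i * ζ i ^ n‖ ≤ R) : ‖b i₀‖ ≤ R := by
  classical
  set K := ∑ i ∈ s.erase i₀, ‖b i‖ * (2 / ‖ζ i - 1‖)
  have hmean (M : ℕ) : M * ‖b i₀‖ ≤ M * R + K := by
    have hsplit : ∑ n ∈ range M, ∑ i ∈ s, b i * ζ i ^ n =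
        M * b i₀ + ∑ i ∈ s.erase i₀, b i * ∑ n ∈ range M, ζ i ^ n := by
      rw [sum_comm, ← add_sum_erase s _ hi₀, hζi₀]
      simp [mul_sum, mul_comm]
    have hrest : ‖∑ i ∈ s.erase i₀, b i * ∑ n ∈ range M, ζ i ^ n‖ ≤ K := by
      refine (norm_sum_le _ _).trans (sum_le_sum fun i hi => ?_)
      obtain ⟨hne, his⟩ := mem_erase.1 hi
      rw [norm_mul]
      exact mul_le_mul_of_nonneg_left (norm_geom_sum_le (hζ i his hne).1 (hζ i his hne).2 M)
        (norm_nonneg _)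
    have hsum : ‖∑ n ∈ range M, ∑ i ∈ s, b i * ζ i ^ n‖ ≤ M * R :=
      (norm_sum_le _ _).trans ((sum_le_card_nsmul _ _ _ fun n _ => hR n).trans (by simp))
    calc M * ‖b i₀‖ = ‖(M : ℂ) * b i₀‖ := by simp
      _ ≤ ‖∑ n ∈ range M, ∑ i ∈ s, b i * ζ i ^ n‖ +
          ‖∑ i ∈ s.erase i₀, b i * ∑ n ∈ range M, ζ i ^ n‖ := by
        rw [hsplit]; exact norm_le_add_norm_add _ _
      _ ≤ M * R + K := add_le_add hsum hrest
  by_contra! hlt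
  obtain ⟨M, hM⟩ := exists_nat_gt (K / (‖b i₀‖ - R))
  rw [div_lt_iff₀ (sub_pos.2 hlt)] at hM
  nlinarith [hmean M]

section Independence

variable {d : ℕ} {α : Fin d → ℝ}

theorem eq_zero_of_sum_intCast_mul_eq_intCast
    (hind : LinearIndependent ℚ (Fin.cons 1 α : Fin (d + 1) → ℝ)) {k : Fin d → ℤ} {z : ℤ}
    (h : ∑ i, (k i : ℝ) * α i = z) : k = 0 := by
  have hrel := Fintype.linearIndependent_iff.1 hind (Fin.cons (-(z : ℚ)) fun i => (k i : ℚ))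
    (by
      simp only [Fin.sum_univ_succ, Fin.cons_zero, Fin.cons_succ, Rat.smul_def]
      push_cast
      rw [h]; ring)
  funext i
  simpa using hrel i.succ

theorem irrational_of_linearIndependent_cons
    (hind : LinearIndependent ℚ (Fin.cons 1 α : Fin (d + 1) → ℝ)) (i : Fin d) :
    Irrational (α i) := by
  rintro ⟨q, hq⟩
  have hk := eq_zero_of_sum_intCast_mul_eq_intCast hind (k := Pi.single i (q.den : ℤ))
    (z := q.num) (by
      rw [Fintype.sum_eq_single i fun j hj => by simp [hj], Pi.single_eq_same, ← hq]
      push_cast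
      exact_mod_cast Rat.den_mul_eq_num q)
  simpa using congrFun hk i

end Independence

theorem centralBinom_pow_le_of_forall_norm_sq_le {d : ℕ} {α : Fin d → ℝ}
    (hind : LinearIndependent ℚ (Fin.cons 1 α : Fin (d + 1) → ℝ)) (c : Fin d → ℝ) {r : ℝ}
    (hr : ∀ n : ℕ, ‖∏ i, (1 + (𝐞 (n * α i - c i) : ℂ))‖ ^ 2 ≤ r) (j : ℕ) :
    (j.centralBinom : ℝ) ^ d ≤ r ^ j := by
  let b (m : Fin d → ℕ) : ℂ := ∏ i, (2 * j).choose (m i) * (𝐞 (-(m i * c i)) : ℂ)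
  let ζ (m : Fin d → ℕ) : ℂ := ∏ i, (𝐞 ((m i - j) * α i) : ℂ)
  -- the phase `∏ i, 𝐞 (-(j n α_i))` recentres the frequencies, so that the central multi-index
  -- `(j, …, j)` carries the frequency `1`
  have hexpand (n : ℕ) : (∏ i, (1 + (𝐞 (n * α i - c i) : ℂ))) ^ (2 * j) *
      ∏ i, (𝐞 (-(j * (n * α i))) : ℂ) =
      ∑ m ∈ Fintype.piFinset fun _ => range (2 * j + 1), b m * ζ m ^ n := by
    rw [← prod_pow, ← prod_mul_distrib]
    simp only [one_add_fourierChar_pow_mul, prod_univ_sum, b, ζ, ← prod_pow,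
      ← prod_mul_distrib]
  have hcentral : (fun _ => j) ∈ Fintype.piFinset fun _ : Fin d => range (2 * j + 1) := by
    simp only [Fintype.mem_piFinset, mem_range]; omega
  have hb : ‖b fun _ => j‖ = (j.centralBinom : ℝ) ^ d := by
    simp [b, Nat.centralBinom_eq_two_mul_choose, Circle.norm_coe]
  have hζcentral : ζ (fun _ => j) = 1 := by simp [ζ]
  rw [← hb]
  refine norm_le_of_forall_norm_sum_mul_pow_le hcentral hζcentral (fun m _ hm => ⟨?_, ?_⟩)
    fun n => ?_
  · simp [ζ, Circle.norm_coe]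
  · rw [show ζ m = _ from prod_fourierChar _ _]
    intro h
    obtain ⟨z, hz⟩ := Real.fourierChar_eq_one_iff.1 (Circle.coe_eq_one.1 h)
    have hk := eq_zero_of_sum_intCast_mul_eq_intCast hind (k := fun i => (m i : ℤ) - j)
      (z := z) (by push_cast; exact hz)
    exact hm (funext fun i => by have := congrFun hk i; simp at this; omega)
  · rw [← hexpand, norm_mul, norm_prod, norm_pow, pow_mul]
    simp only [Circle.norm_coe, prod_const_one, mul_one]
    exact pow_le_pow_left₀ (sq_nonneg _) (hr n) j

open Filter Topology in
theorem exists_pow_lt_centralBinom_pow {d : ℕ} {r : ℝ} (hr0 : 0 ≤ r) (hr : r < 4 ^ d) :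
    ∃ j : ℕ, r ^ j < (j.centralBinom : ℝ) ^ d := by
  set s := r / 4 ^ d
  have hs : |s| < 1 := by
    rw [abs_of_nonneg (by positivity)]; exact (div_lt_one (by positivity)).2 hr
  have hlim : Tendsto (fun j : ℕ => 2 ^ d * ((j : ℝ) ^ d * s ^ j)) atTop (𝓝 0) := by
    simpa using (tendsto_pow_const_mul_const_pow_of_abs_lt_one d hs).const_mul (2 ^ d)
  obtain ⟨j, hj1, hj⟩ :=
    ((eventually_ge_atTop 1).and (hlim.eventually_lt_const one_pos)).exists
  have hC : (4 : ℝ) ^ j ≤ 2 * j * j.centralBinom := by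
    exact_mod_cast Nat.four_pow_le_two_mul_self_mul_centralBinom j hj1
  have hCpos : (0 : ℝ) < (j.centralBinom : ℝ) ^ d := pow_pos (mod_cast j.centralBinom_pos) d
  refine ⟨j, ?_⟩
  calc r ^ j = s ^ j * ((4 : ℝ) ^ j) ^ d := by
        rw [div_pow, ← pow_mul, ← pow_mul, mul_comm j d, div_mul_cancel₀ _ (by positivity)]
    _ ≤ s ^ j * (2 * j * j.centralBinom) ^ d := by gcongr
    _ = 2 ^ d * ((j : ℝ) ^ d * s ^ j) * (j.centralBinom : ℝ) ^ d := by ring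
    _ < (j.centralBinom : ℝ) ^ d := mul_lt_of_lt_one_left hCpos hj

theorem norm_prod_one_add_fourierChar_sq_le {ι : Type*} [Fintype ι] [DecidableEq ι]
    (θ : ι → ℝ) {i₀ : ι} {ρ : ℝ} (h : ‖1 + (𝐞 (θ i₀) : ℂ)‖ ^ 2 ≤ ρ) :
    ‖∏ i, (1 + (𝐞 (θ i) : ℂ))‖ ^ 2 ≤ ρ * 4 ^ (Fintype.card ι - 1) := by
  rw [norm_prod, ← prod_pow, ← mul_prod_erase univ _ (mem_univ i₀)]
  refine mul_le_mul h ?_ (prod_nonneg fun _ _ => sq_nonneg _) ((sq_nonneg _).trans h)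
  calc ∏ i ∈ univ.erase i₀, ‖1 + (𝐞 (θ i) : ℂ)‖ ^ 2 ≤ ∏ _i ∈ univ.erase i₀, (4 : ℝ) :=
        prod_le_prod (fun _ _ => sq_nonneg _) fun i _ => by
          nlinarith [Real.norm_one_add_fourierChar_le (θ i), norm_nonneg (1 + (𝐞 (θ i) : ℂ))]
    _ = 4 ^ (Fintype.card ι - 1) := by
        rw [prod_const, card_erase_of_mem (mem_univ _), card_univ]

theorem exists_nat_abs_mul_sub_sub_intCast_lt {d : ℕ} {α : Fin d → ℝ}
    (hind : LinearIndependent ℚ (Fin.cons 1 α : Fin (d + 1) → ℝ)) (c : Fin d → ℝ) {ε : ℝ}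
    (hε : 0 < ε) : ∃ n : ℕ, ∀ i, ∃ z : ℤ, |n * α i - c i - z| < ε := by
  by_contra! hfar
  obtain ⟨i₀, hi₀⟩ := hfar 0
  have hε2 : ε ≤ 1 / 2 := (hi₀ _).trans (abs_sub_round _)
  set ρ := 2 + 2 * Real.cos (2 * π * ε) with hρdef
  have hρ0 : 0 ≤ ρ := by linarith [Real.neg_one_le_cos (2 * π * ε)]
  have hρ : ρ < 4 := by
    have := Real.cos_lt_cos_of_nonneg_of_le_pi le_rfl (by nlinarith [Real.pi_pos])
      (by positivity : 0 < 2 * π * ε)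
    rw [Real.cos_zero] at this
    linarith
  have hbound (n : ℕ) : ‖∏ i, (1 + (𝐞 (n * α i - c i) : ℂ))‖ ^ 2 ≤ ρ * 4 ^ (d - 1) := by
    obtain ⟨i, hi⟩ := hfar n
    simpa using norm_prod_one_add_fourierChar_sq_le (fun i => n * α i - c i)
      (Real.norm_one_add_fourierChar_sq_le hε.le (hi _))
  obtain ⟨j, hj⟩ := exists_pow_lt_centralBinom_pow (r := ρ * 4 ^ (d - 1)) (by positivity) <|
    calc ρ * 4 ^ (d - 1) < 4 * 4 ^ (d - 1) := by gcongr
      _ = 4 ^ d := by rw [← pow_succ', Nat.sub_add_cancel (Fin.pos i₀)]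
  exact hj.not_ge (centralBinom_pow_le_of_forall_norm_sq_le hind c hbound j)

open Filter Topology in
theorem exists_nat_fract_mul_mem_Ioo {d : ℕ} {α : Fin d → ℝ}
    (hind : LinearIndependent ℚ (Fin.cons 1 α : Fin (d + 1) → ℝ)) {u v : Fin d → ℝ}
    (hu : ∀ i, 0 ≤ u i) (huv : ∀ i, u i < v i) (hv : ∀ i, v i ≤ 1) :
    ∃ n : ℕ, ∀ i, Int.fract (n * α i) ∈ Set.Ioo (u i) (v i) := by
  obtain ⟨ε, hε, hεuv⟩ : ∃ ε : ℝ, 0 < ε ∧ ∀ i, ε < (v i - u i) / 2 :=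
    (eventually_mem_nhdsWithin.and (eventually_all.2 fun i => nhdsWithin_le_nhds
      (eventually_lt_nhds (half_pos (sub_pos.2 (huv i)))))).exists (f := 𝓝[>] (0 : ℝ))
  obtain ⟨n, hn⟩ := exists_nat_abs_mul_sub_sub_intCast_lt hind (fun i => (u i + v i) / 2) hε
  refine ⟨n, fun i => ?_⟩
  obtain ⟨z, hz⟩ := hn i
  have hz' := abs_lt.1 (hz.trans (hεuv i))
  have hfract : Int.fract (n * α i) = n * α i - z :=
    Int.fract_eq_iff.2 ⟨by linarith [hu i], by linarith [hv i], z, by ring⟩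
  rw [hfract]
  constructor <;> linarith

noncomputable def sturmian (β : ℝ) (n : ℕ) : ℤ := ⌊(n : ℝ) * β⌋ - ⌊((n : ℝ) - 1) * β⌋

/-- `1 - fract (m β)` is the phase `x` at which `⌊m β + x⌋` jumps (`Int.floor_add_eq_ite`). -/
noncomputable def sturmianThresholds (β : ℝ) (N : ℕ) : Finset ℝ :=
  (Finset.Icc 1 N).image fun m : ℕ => 1 - Int.fract (m * β)

/-- Encodes the length-`N` factor of `sturmian β` starting at `n` (`sturmian.factor_eq_iff`). -/
noncomputable def sturmianRank (β : ℝ) (N n : ℕ) : ℕ :=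
  #{θ ∈ sturmianThresholds β N | θ ≤ Int.fract ((n - 1) * β)}

namespace sturmianThresholds

theorem card {β : ℝ} (hβ : Irrational β) (N : ℕ) : #(sturmianThresholds β N) = N := by
  rw [sturmianThresholds, card_image_of_injOn, Nat.card_Icc, Nat.add_sub_cancel]
  intro m _ m' _ h
  obtain ⟨z, hz⟩ := Int.fract_eq_fract.1 (sub_right_injective h)
  by_contra hne
  refine (hβ.intCast_mul (m := (m : ℤ) - m') (by omega)).ne_int z ?_
  push_cast
  rw [← hz]; ring

theorem mem_Ioo {β : ℝ} (hβ : Irrational β) {N : ℕ} :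
    ∀ θ ∈ sturmianThresholds β N, θ ∈ Set.Ioo 0 1 := by
  simp only [sturmianThresholds, forall_mem_image, Finset.mem_Icc, Set.mem_Ioo, sub_pos,
    sub_lt_self_iff]
  intro m hm
  exact ⟨Int.fract_lt_one _, Int.fract_pos.2 ((hβ.natCast_mul (by omega)).ne_int _)⟩

theorem forall_floor_mul_add_eq_iff {β x x' : ℝ} (hx : x ∈ Set.Ico 0 1)
    (hx' : x' ∈ Set.Ico 0 1) (N : ℕ) :
    (∀ m ≤ N, ⌊(m : ℝ) * β + x⌋ = ⌊(m : ℝ) * β + x'⌋) ↔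
      ∀ θ ∈ sturmianThresholds β N, (θ ≤ x ↔ θ ≤ x') := by
  simp only [sturmianThresholds, Finset.forall_mem_image, Finset.mem_Icc,
    Int.floor_add_eq_ite _ hx, Int.floor_add_eq_ite _ hx', add_right_inj]
  refine forall_congr' fun m => ?_
  rcases Nat.eq_zero_or_pos m with rfl | hm
  · simp [hx.2.not_ge, hx'.2.not_ge]
  · constructor
    · intro h hmN; have := h hmN.2; split_ifs at this <;> tauto
    · intro h hmN; have := h ⟨hm, hmN⟩; split_ifs <;> tauto

end sturmianThresholds

namespace sturmian

theorem sum_range_add (β : ℝ) (n m : ℕ) :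
    ∑ k ∈ range m, sturmian β (n + k) = ⌊m * β + Int.fract ((n - 1) * β)⌋ := by
  let f : ℕ → ℤ := fun k => ⌊(((n + k : ℕ) : ℝ) - 1) * β⌋
  have hstep : ∀ k, sturmian β (n + k) = f (k + 1) - f k := fun k => by
    simp only [sturmian, f]; push_cast; ring_nf
  rw [sum_congr rfl fun k _ => hstep k, sum_range_sub, Int.fract, ← add_sub_assoc,
    Int.floor_sub_intCast]
  simp only [f]; push_cast; ring_nf

theorem factor_eq_iff (β : ℝ) (N n n' : ℕ) :
    (∀ k < N, sturmian β (n + k) = sturmian β (n' + k)) ↔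
      sturmianRank β N n = sturmianRank β N n' := by
  rw [forall_lt_eq_iff_forall_le_sum_range_eq, sturmianRank, sturmianRank,
    card_filter_le_eq_card_filter_le_iff]
  simp only [sum_range_add]
  exact sturmianThresholds.forall_floor_mul_add_eq_iff ⟨Int.fract_nonneg _, Int.fract_lt_one _⟩
    ⟨Int.fract_nonneg _, Int.fract_lt_one _⟩ N

end sturmian

theorem range_sturmianRank {d : ℕ} {α : Fin d → ℝ}
    (hind : LinearIndependent ℚ (Fin.cons 1 α : Fin (d + 1) → ℝ)) (N : ℕ) :
    Set.range (fun n i => sturmianRank (α i) N n) =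
      ↑(Fintype.piFinset fun _ : Fin d => range (N + 1)) := by
  have hirr := irrational_of_linearIndependent_cons hind
  ext t
  simp only [Set.mem_range, mem_coe, Fintype.mem_piFinset, mem_range, Nat.lt_succ_iff]
  constructor
  · rintro ⟨n, rfl⟩ i
    exact (card_filter_le _ _).trans (sturmianThresholds.card (hirr i) N).le
  · intro ht
    choose u v hu huv hv hcount using fun i =>
      exists_Ioo_card_filter_le_eq zero_lt_one (sturmianThresholds.mem_Ioo (hirr i))
        (t := t i) ((ht i).trans_eq (sturmianThresholds.card (hirr i) N).symm)
    obtain ⟨n, hn⟩ := exists_nat_fract_mul_mem_Ioo hind hu huv hv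
    refine ⟨n + 1, funext fun i => ?_⟩
    simpa only [sturmianRank, Nat.cast_succ, add_sub_cancel_right] using hcount i _ (hn i)

theorem complexity_product_sturmian_general (d : ℕ) (α : Fin d → ℝ)
    (hind : LinearIndependent ℚ (Fin.cons 1 α : Fin (d + 1) → ℝ))
    (a : ℕ → Fin d → ℤ)
    (ha : ∀ n i, a n i = ⌊(n : ℝ) * α i⌋ - ⌊((n : ℝ) - 1) * α i⌋)
    (N : ℕ) :
    {w : Fin N → Fin d → ℤ | ∃ n : ℕ, ∀ k : Fin N, w k = a (n + k)}.ncard =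
      (N + 1) ^ d := by
  have hfactors : {w : Fin N → Fin d → ℤ | ∃ n : ℕ, ∀ k : Fin N, w k = a (n + k)} =
      Set.range fun n (k : Fin N) => a (n + k) := by
    ext w; simp [funext_iff, eq_comm]
  have hker (n n' : ℕ) : (fun k : Fin N => a (n + k)) = (fun k : Fin N => a (n' + k)) ↔
      (fun i => sturmianRank (α i) N n) = (fun i => sturmianRank (α i) N n') := by
    simp only [funext_iff]
    rw [forall_comm]
    refine forall_congr' fun i => ?_
    rw [← sturmian.factor_eq_iff, Fin.forall_iff]
    simp only [ha, sturmian]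
  rw [hfactors, Set.ncard_range_eq_ncard_range hker, range_sturmianRank hind,
    Set.ncard_coe_finset, Fintype.card_piFinset_const, card_range]

theorem complexity_product_sturmian (d : ℕ) (hd : 1 ≤ d) (α : Fin d → ℝ)
    (hind : LinearIndependent ℚ (Fin.cons 1 α : Fin (d + 1) → ℝ))
    (a : ℕ → Fin d → ℤ)
    (ha : ∀ n i, a n i = ⌊(n : ℝ) * α i⌋ - ⌊((n : ℝ) - 1) * α i⌋)
    (N : ℕ) (hN : 1 ≤ N) :
    {w : Fin N → Fin d → ℤ | ∃ n : ℕ, ∀ k : Fin N, w k = a (n + k)}.ncard =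
      (N + 1) ^ d :=
  complexity_product_sturmian_general d α hind a ha N
end
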